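/- Let b_1,b_2,b_3,b_4 be nonzero real numbers and x_1,x_2,x_3,x_4 points of ℝ² such that for all i ≠ j one has ‖x_i − x_j‖² = (1/b_i + 1/b_j)² (an ordered oriented Descartes configuration with no lines). Let W be the 4×4 real matrix whose i-th row is the augmented curvature-center coordinate vector w(b_i, x_i) = (b_i‖x_i‖² − 1/b_i, b_i, b_i·x_i(1), b_i·x_i(2)). Then Wᵀ·Q_D·W = Q_W. -/

import Mathlib

/-!
Write `N = QW⁻¹`. For ACC vectors the bilinear form of `N` measures tangency:
`w(b,x) N w(b',x')ᵀ = (b b'/4)((1/b + 1/b')² - ‖x - x'‖²) - 1/2`, which is `1/2` for a circle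
with itself and `-1/2` for two tangent circles. Hence `W N Wᵀ = QD`; since `QD² = 1`, `W` is
invertible and the identity can be turned around into `Wᵀ QD W = N⁻¹ = QW`.
-/

open Matrix

/-- The matrix of the Descartes quadratic form: diagonal entries `1/2`,
off-diagonal entries `-1/2`. -/
noncomputable def QD : Matrix (Fin 4) (Fin 4) ℝ :=
  Matrix.of fun i j => if i = j then 1/2 else -1/2

/-- The matrix of the Wilker quadratic form. -/
noncomputable def QW : Matrix (Fin 4) (Fin 4) ℝ :=
  !![0, -4, 0, 0; -4, 0, 0, 0; 0, 0, 2, 0; 0, 0, 0, 2]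

theorem Matrix.mul_mul_eq_of_mul_mul_eq_of_mul_self_eq_one {n R : Type*} [Fintype n]
    [DecidableEq n] [CommRing R] {A B C D Q : Matrix n n R}
    (hABD : A * B * D = Q) (hQ : Q * Q = 1) (hCB : C * B = 1) : D * Q * A = C := by
  have hright : A * (B * D * Q) = 1 := by rw [← Matrix.mul_assoc, ← Matrix.mul_assoc, hABD, hQ]
  have hleft : B * D * Q * A = 1 := mul_eq_one_comm.mp hright
  calc D * Q * A = C * B * (D * Q * A) := by rw [hCB, Matrix.one_mul]
    _ = C * (B * D * Q * A) := by simp only [Matrix.mul_assoc]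
    _ = C := by rw [hleft, Matrix.mul_one]

theorem QD_mul_self : QD * QD = 1 := by
  ext i j
  fin_cases i <;> fin_cases j <;> simp [QD, mul_apply, Fin.sum_univ_four, one_apply] <;> norm_num

noncomputable def QWinv : Matrix (Fin 4) (Fin 4) ℝ :=
  !![0, -1/4, 0, 0; -1/4, 0, 0, 0; 0, 0, 1/2, 0; 0, 0, 0, 1/2]

theorem QW_mul_QWinv : QW * QWinv = 1 := by
  ext i j
  fin_cases i <;> fin_cases j <;> simp [QW, QWinv, mul_apply, Fin.sum_univ_four] <;> norm_num

/-- The augmented curvature-center coordinates `w(b, x)`. -/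
noncomputable def acc (b : ℝ) (x : EuclideanSpace ℝ (Fin 2)) : Fin 4 → ℝ :=
  ![b * ‖x‖ ^ 2 - 1 / b, b, b * x 0, b * x 1]

theorem acc_dotProduct_QWinv_mulVec_acc {b b' : ℝ} (hb : b ≠ 0) (hb' : b' ≠ 0)
    (x x' : EuclideanSpace ℝ (Fin 2)) :
    acc b x ⬝ᵥ QWinv *ᵥ acc b' x' =
      b * b' / 4 * ((1 / b + 1 / b') ^ 2 - ‖x - x'‖ ^ 2) - 1 / 2 := by
  simp only [acc, QWinv, EuclideanSpace.real_norm_sq_eq, Fin.sum_univ_two, PiLp.sub_apply,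
    dotProduct, mulVec, Fin.sum_univ_four, of_apply, cons_val', cons_val_fin_one, cons_val_zero,
    cons_val_one, cons_val]
  field_simp
  ring

theorem acc_mul_QWinv_mul_transpose_eq_QD (b : Fin 4 → ℝ) (hb : ∀ i, b i ≠ 0)
    (x : Fin 4 → EuclideanSpace ℝ (Fin 2))
    (htangent : ∀ i j, i ≠ j → ‖x i - x j‖ ^ 2 = (1 / b i + 1 / b j) ^ 2) :
    (of fun i => acc (b i) (x i)) * QWinv * (of fun i => acc (b i) (x i))ᵀ = QD := by
  ext i j
  rw [mul_mul_apply, transpose_transpose]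
  change acc (b i) (x i) ⬝ᵥ QWinv *ᵥ acc (b j) (x j) = QD i j
  rw [acc_dotProduct_QWinv_mulVec_acc (hb i) (hb j), QD, of_apply]
  split_ifs with hij
  · subst hij
    have hbi := hb i
    rw [sub_self, norm_zero]
    field_simp
    ring
  · rw [htangent i j hij]
    ring

/-- **Augmented Euclidean Descartes Theorem (forward direction, no lines).**
If four oriented circles with nonzero signed curvatures `b i` and centers `x i`
are pairwise tangent with compatible orientations, then the augmented
curvature-center coordinate matrix `W`, whose `i`-th row is
`(b i * ‖x i‖² - 1 / b i, b i, b i * x i 0, b i * x i 1)`,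
satisfies `Wᵀ * QD * W = QW`. -/
theorem augmented_curvature_center_matrix_eq
    (b : Fin 4 → ℝ) (hb : ∀ i, b i ≠ 0)
    (x : Fin 4 → EuclideanSpace ℝ (Fin 2))
    (htangent : ∀ i j, i ≠ j → ‖x i - x j‖ ^ 2 = (1 / b i + 1 / b j) ^ 2)
    (W : Matrix (Fin 4) (Fin 4) ℝ)
    (hW : W = Matrix.of fun i k =>
      ![b i * ‖x i‖ ^ 2 - 1 / b i, b i, b i * x i 0, b i * x i 1] k) :
    Wᵀ * QD * W = QW := by
  subst hW
  exact mul_mul_eq_of_mul_mul_eq_of_mul_self_eq_one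
    (acc_mul_QWinv_mul_transpose_eq_QD b hb x htangent) QD_mul_self QW_mul_QWinv
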